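/- arXiv:q-bio/0501016 — 2 statements merged into one kernel-verified Lean document; each statement's English description precedes it below -/
import Mathlib

section
/- In a consistent reaction system, if a set S ⊆ M is self-maintaining, then its closure GCL(S) is also self-maintaining. -/
/-- A set `C` is closed: products of reactions whose reactants all lie in `C` lie in `C`. -/
def Closed {ι ρ : Type*} (re : ρ → Multiset ι × Multiset ι) (C : Set ι) : Prop :=
  ∀ r : ρ, (∀ a ∈ (re r).1, a ∈ C) → ∀ b ∈ (re r).2, b ∈ C

/-- Molecule `k` is produced within `C`. -/
def Produced {ι ρ : Type*} [DecidableEq ι] (re : ρ → Multiset ι × Multiset ι)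
    (C : Set ι) (k : ι) : Prop :=
  ∃ r : ρ, (∀ a ∈ (re r).1, a ∈ C) ∧ (re r).1.count k < (re r).2.count k

/-- Molecule `k` is used-up within `C`. -/
def UsedUp {ι ρ : Type*} [DecidableEq ι] (re : ρ → Multiset ι × Multiset ι)
    (C : Set ι) (k : ι) : Prop :=
  ∃ r : ρ, (∀ a ∈ (re r).1, a ∈ C) ∧ (re r).2.count k < (re r).1.count k

/-- `S` is self-maintaining. -/
def SelfMaintaining {ι ρ : Type*} [DecidableEq ι] (re : ρ → Multiset ι × Multiset ι)
    (S : Set ι) : Prop :=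
  ∀ k ∈ S, UsedUp re S k → Produced re S k

/-- A semi-organization is closed and self-maintaining. -/
def SemiOrganization {ι ρ : Type*} [DecidableEq ι] (re : ρ → Multiset ι × Multiset ι)
    (S : Set ι) : Prop :=
  Closed re S ∧ SelfMaintaining re S

/-- Entry of the stoichiometric matrix: products minus reactants multiplicity. -/
noncomputable def stoich {ι ρ : Type*} [DecidableEq ι] (re : ρ → Multiset ι × Multiset ι)
    (i : ι) (r : ρ) : ℝ :=
  ((re r).2.count i : ℝ) - ((re r).1.count i : ℝ)

/-- `C` is mass-maintaining. -/
def MassMaintaining {ι ρ : Type*} [DecidableEq ι] [Fintype ρ]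
    (re : ρ → Multiset ι × Multiset ι) (C : Set ι) : Prop :=
  ∃ v : ρ → ℝ,
    (∀ r : ρ, (∀ a ∈ (re r).1, a ∈ C) → 0 < v r) ∧
    (∀ r : ρ, ¬ (∀ a ∈ (re r).1, a ∈ C) → v r = 0) ∧
    (∀ i ∈ C, 0 ≤ ∑ r : ρ, stoich re i r * v r)

/-- An organization is closed and mass-maintaining. -/
def Organization {ι ρ : Type*} [DecidableEq ι] [Fintype ρ]
    (re : ρ → Multiset ι × Multiset ι) (O : Set ι) : Prop :=
  Closed re O ∧ MassMaintaining re O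

/-- The closure of `S`: the smallest closed set containing `S`. -/
def GCL {ι ρ : Type*} (re : ρ → Multiset ι × Multiset ι) (S : Set ι) : Set ι :=
  ⋂₀ {C : Set ι | Closed re C ∧ S ⊆ C}

/-- A catalytic flow system: every molecule has a dilution reaction `{k} → ∅`,
and no molecule is used-up by any other reaction. -/
def CatalyticFlow {ι ρ : Type*} [DecidableEq ι] (re : ρ → Multiset ι × Multiset ι) : Prop :=
  (∀ k : ι, ∃ r : ρ, re r = ({k}, (0 : Multiset ι))) ∧
  (∀ r : ρ, (¬ ∃ k : ι, re r = ({k}, (0 : Multiset ι))) →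
    ∀ k : ι, (re r).1.count k ≤ (re r).2.count k)

/-- A consistent reaction system with persistent molecules `P`. -/
def Consistent {ι ρ : Type*} [DecidableEq ι] (re : ρ → Multiset ι × Multiset ι)
    (P : Set ι) : Prop :=
  (∀ k : ι, k ∉ P → ∃ r : ρ, (re r).1 = {k} ∧ k ∉ (re r).2) ∧
  (∀ r : ρ, ∀ p ∈ P, (re r).1.count p ≤ (re r).2.count p)

/-- `S` is the largest self-maintaining subset of `C`. -/
def IsGSM {ι ρ : Type*} [DecidableEq ι] (re : ρ → Multiset ι × Multiset ι)
    (C S : Set ι) : Prop :=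
  S ⊆ C ∧ SelfMaintaining re S ∧ ∀ T : Set ι, T ⊆ C → SelfMaintaining re T → T ⊆ S

/-- `S` is the largest mass-maintaining subset of `C`. -/
def IsGMM {ι ρ : Type*} [DecidableEq ι] [Fintype ρ] (re : ρ → Multiset ι × Multiset ι)
    (C S : Set ι) : Prop :=
  S ⊆ C ∧ MassMaintaining re S ∧ ∀ T : Set ι, T ⊆ C → MassMaintaining re T → T ⊆ S

/-- An admissible flux function w.r.t. threshold `Φ`: nonnegative, and positive
exactly when all reactants are present (above threshold). -/
def Admissible {ι ρ : Type*} (re : ρ → Multiset ι × Multiset ι) (Φ : ℝ)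
    (v : (ι → ℝ) → ρ → ℝ) : Prop :=
  ∀ x : ι → ℝ, ∀ r : ρ, 0 ≤ v x r ∧ (0 < v x r ↔ ∀ a ∈ (re r).1, x a > Φ)

/-!
Every molecule of `GCL S` lies in `S` or is produced within `GCL S`, because the molecules with
this property already form a closed set containing `S`. A persistent molecule is never used up,
and a non-persistent molecule of `S` is used up within `S` by its decay reaction, so
self-maintenance of `S` makes it produced within `S`, hence within the larger set `GCL S`.
-/

section Closure

variable {ι ρ : Type*} {re : ρ → Multiset ι × Multiset ι} {S C : Set ι}

theorem subset_GCL : S ⊆ GCL re S :=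
  fun _ hx _ hC => hC.2 hx

theorem GCL_subset_of_closed (hC : Closed re C) (hSC : S ⊆ C) : GCL re S ⊆ C :=
  Set.sInter_subset_of_mem ⟨hC, hSC⟩

theorem closed_GCL : Closed re (GCL re S) :=
  fun r hr b hb C hC => hC.1 r (fun a ha => hr a ha C hC) b hb

variable [DecidableEq ι]

theorem Produced.mono {D : Set ι} {k : ι} (hCD : C ⊆ D) (hk : Produced re C k) :
    Produced re D k :=
  let ⟨r, hr, hlt⟩ := hk
  ⟨r, fun a ha => hCD (hr a ha), hlt⟩

theorem mem_or_produced_of_mem_GCL {k : ι} (hk : k ∈ GCL re S) :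
    k ∈ S ∨ Produced re (GCL re S) k := by
  let T : Set ι := {k | k ∈ GCL re S ∧ (k ∈ S ∨ Produced re (GCL re S) k)}
  have hT : Closed re T := by
    intro r hr b hb
    have hrG : ∀ a ∈ (re r).1, a ∈ GCL re S := fun a ha => (hr a ha).1
    refine ⟨closed_GCL r hrG b hb, ?_⟩
    by_cases hlt : (re r).1.count b < (re r).2.count b
    · exact Or.inr ⟨r, hrG, hlt⟩
    · -- `b` is not produced by `r`, so it is already one of its reactants
      have hb₁ : b ∈ (re r).1 :=
        Multiset.count_pos.mp ((Multiset.count_pos.mpr hb).trans_le (not_lt.mp hlt))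
      exact (hr b hb₁).2
  exact (GCL_subset_of_closed hT (fun x hx => ⟨subset_GCL hx, Or.inl hx⟩) hk).2

end Closure

namespace Consistent

variable {ι ρ : Type*} [DecidableEq ι] {re : ρ → Multiset ι × Multiset ι} {P C : Set ι} {k : ι}

theorem not_usedUp_of_mem (h : Consistent re P) (hk : k ∈ P) : ¬ UsedUp re C k :=
  fun ⟨r, _, hlt⟩ => (h.2 r k hk).not_gt hlt

theorem usedUp_of_not_mem (h : Consistent re P) (hkP : k ∉ P) (hkC : k ∈ C) : UsedUp re C k := by
  obtain ⟨r, hr₁, hr₂⟩ := h.1 k hkP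
  refine ⟨r, fun a ha => ?_, ?_⟩
  · rw [hr₁, Multiset.mem_singleton] at ha
    exact ha ▸ hkC
  · simp [hr₁, Multiset.count_eq_zero.mpr hr₂]

end Consistent

theorem stmt7_general {ι ρ : Type*} [DecidableEq ι]
    (re : ρ → Multiset ι × Multiset ι) (P : Set ι) (h : Consistent re P)
    (S : Set ι) (hS : SelfMaintaining re S) :
    SelfMaintaining re (GCL re S) := by
  intro k hk hku
  by_cases hkP : k ∈ P
  · exact absurd hku (h.not_usedUp_of_mem hkP)
  rcases mem_or_produced_of_mem_GCL hk with hkS | hprod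
  · exact (hS k hkS (h.usedUp_of_not_mem hkP hkS)).mono subset_GCL
  · exact hprod

/-- in a consistent reaction system, the closure of a
self-maintaining set is self-maintaining. -/
theorem stmt7 {ι ρ : Type*} [Fintype ι] [Fintype ρ] [DecidableEq ι]
    (re : ρ → Multiset ι × Multiset ι) (P : Set ι) (h : Consistent re P)
    (S : Set ι) (hS : SelfMaintaining re S) :
    SelfMaintaining re (GCL re S) :=
  stmt7_general re P h S hS
end

section
/- In a consistent reaction system, the collection of semi-organizations, ordered by set inclusion, forms a lattice: any two semi-organizations U and V have a least upper bound and a greatest lower bound within the collection of semi-organizations. -/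
/-!
In a consistent reaction system only non-persistent molecules are ever used up, and each of them
is used up (by its decay reaction) in every set that contains it. Self-maintenance therefore just
says that every non-persistent member is produced, a property that passes to unions and to
closures, since a molecule of the closure `GCL S` lies in `S` or is produced within `GCL S`.
Hence for any family of semi-organizations the closure of its union is the least
semi-organization above the family. The join of `U` and `V` is this for `{U, V}`, the meet is it
for the family of semi-organizations contained in both.
-/

section

variable {ι ρ : Type*} {re : ρ → Multiset ι × Multiset ι}

lemma subset_gcl (S : Set ι) : S ⊆ GCL re S :=
  fun _ hx _ hC => hC.2 hx

lemma closed_gcl (S : Set ι) : Closed re (GCL re S) :=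
  fun r hr b hb C hC => hC.1 r (fun a ha => hr a ha C hC) b hb

lemma gcl_minimal {S C : Set ι} (hC : Closed re C) (hSC : S ⊆ C) : GCL re S ⊆ C :=
  Set.sInter_subset_of_mem ⟨hC, hSC⟩

section Produced

variable [DecidableEq ι]

lemma Produced.mono_s10 {S T : Set ι} {k : ι} (hST : S ⊆ T) (h : Produced re S k) :
    Produced re T k :=
  let ⟨r, hr, hk⟩ := h
  ⟨r, fun a ha => hST (hr a ha), hk⟩

lemma Closed.mem_of_produced {C : Set ι} {k : ι} (hC : Closed re C) (h : Produced re C k) :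
    k ∈ C := by
  obtain ⟨r, hr, hk⟩ := h
  exact hC r hr k (Multiset.count_pos.mp (by omega))

lemma mem_or_produced_of_mem_gcl {S : Set ι} {k : ι} (hk : k ∈ GCL re S) :
    k ∈ S ∨ Produced re (GCL re S) k := by
  set T : Set ι := S ∪ {k | Produced re (GCL re S) k}
  have hTG : T ⊆ GCL re S :=
    Set.union_subset (subset_gcl S) fun _ => (closed_gcl S).mem_of_produced
  have hT : Closed re T := by
    intro r hr b hb
    have hrG : ∀ a ∈ (re r).1, a ∈ GCL re S := fun a ha => hTG (hr a ha)
    by_cases hc : (re r).1.count b < (re r).2.count b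
    · exact Or.inr ⟨r, hrG, hc⟩
    · have := Multiset.count_pos.mpr hb
      exact hr b (Multiset.count_pos.mp (by omega))
  exact gcl_minimal hT Set.subset_union_left hk

end Produced

namespace Consistent

variable [DecidableEq ι] {P : Set ι}

lemma notMem_of_usedUp (h : Consistent re P) {S : Set ι} {k : ι} (hk : UsedUp re S k) :
    k ∉ P := fun hkP =>
  let ⟨r, _, hr⟩ := hk
  (h.2 r k hkP).not_gt hr

lemma usedUp_of_notMem (h : Consistent re P) {S : Set ι} {k : ι} (hkP : k ∉ P)
    (hkS : k ∈ S) : UsedUp re S k := by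
  obtain ⟨r, hr1, hr2⟩ := h.1 k hkP
  refine ⟨r, fun a ha => ?_, ?_⟩
  · rw [hr1, Multiset.mem_singleton] at ha
    exact ha ▸ hkS
  · rw [hr1, Multiset.count_singleton_self, Multiset.count_eq_zero.mpr hr2]
    exact Nat.one_pos

lemma selfMaintaining_iff (h : Consistent re P) {S : Set ι} :
    SelfMaintaining re S ↔ ∀ k ∈ S, k ∉ P → Produced re S k :=
  ⟨fun hS k hkS hkP => hS k hkS (h.usedUp_of_notMem hkP hkS),
    fun hS k hkS hk => hS k hkS (h.notMem_of_usedUp hk)⟩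

lemma selfMaintaining_sUnion (h : Consistent re P) {F : Set (Set ι)}
    (hF : ∀ S ∈ F, SelfMaintaining re S) : SelfMaintaining re (⋃₀ F) := by
  rw [h.selfMaintaining_iff]
  rintro k ⟨S, hSF, hkS⟩ hkP
  exact ((h.selfMaintaining_iff.mp (hF S hSF)) k hkS hkP).mono_s10 (Set.subset_sUnion_of_mem hSF)

lemma selfMaintaining_gcl (h : Consistent re P) {S : Set ι} (hS : SelfMaintaining re S) :
    SelfMaintaining re (GCL re S) := by
  rw [h.selfMaintaining_iff] at hS ⊢
  intro k hk hkP
  rcases mem_or_produced_of_mem_gcl hk with hkS | hprod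
  · exact (hS k hkS hkP).mono_s10 (subset_gcl S)
  · exact hprod

lemma isLeast_gcl_sUnion (h : Consistent re P) {F : Set (Set ι)}
    (hF : ∀ S ∈ F, SemiOrganization re S) :
    IsLeast {W | SemiOrganization re W ∧ ∀ S ∈ F, S ⊆ W} (GCL re (⋃₀ F)) :=
  ⟨⟨⟨closed_gcl _, h.selfMaintaining_gcl (h.selfMaintaining_sUnion fun S hS => (hF S hS).2)⟩,
      fun _ hS => (Set.subset_sUnion_of_mem hS).trans (subset_gcl _)⟩,
    fun _ hW => gcl_minimal hW.1.1 (Set.sUnion_subset hW.2)⟩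

end Consistent

end

theorem stmt10_general {ι ρ : Type*} [DecidableEq ι]
    (re : ρ → Multiset ι × Multiset ι) (P : Set ι) (h : Consistent re P)
    (U V : Set ι) (hU : SemiOrganization re U) (hV : SemiOrganization re V) :
    (∃ W : Set ι, SemiOrganization re W ∧ U ⊆ W ∧ V ⊆ W ∧
      ∀ W' : Set ι, SemiOrganization re W' → U ⊆ W' → V ⊆ W' → W ⊆ W') ∧
    (∃ W : Set ι, SemiOrganization re W ∧ W ⊆ U ∧ W ⊆ V ∧
      ∀ W' : Set ι, SemiOrganization re W' → W' ⊆ U → W' ⊆ V → W' ⊆ W) := by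
  constructor
  · obtain ⟨⟨hW, hUV⟩, hmin⟩ := h.isLeast_gcl_sUnion (F := {U, V}) (by
      rintro S (rfl | rfl) <;> assumption)
    exact ⟨_, hW, hUV U (by simp), hUV V (by simp),
      fun W' hW' hUW' hVW' => hmin ⟨hW', by rintro S (rfl | rfl) <;> assumption⟩⟩
  · set F : Set (Set ι) := {S | SemiOrganization re S ∧ S ⊆ U ∧ S ⊆ V}
    obtain ⟨⟨hW, -⟩, hmin⟩ := h.isLeast_gcl_sUnion (F := F) fun S hS => hS.1
    exact ⟨_, hW, hmin ⟨hU, fun S hS => hS.2.1⟩, hmin ⟨hV, fun S hS => hS.2.2⟩,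
      fun W' hW' hW'U hW'V =>
        (Set.subset_sUnion_of_mem (show W' ∈ F from ⟨hW', hW'U, hW'V⟩)).trans (subset_gcl _)⟩

/-- in a consistent reaction system, any two semi-organizations
have a least upper bound and a greatest lower bound among semi-organizations. -/
theorem stmt10 {ι ρ : Type*} [Fintype ι] [Fintype ρ] [DecidableEq ι]
    (re : ρ → Multiset ι × Multiset ι) (P : Set ι) (h : Consistent re P)
    (U V : Set ι) (hU : SemiOrganization re U) (hV : SemiOrganization re V) :
    (∃ W : Set ι, SemiOrganization re W ∧ U ⊆ W ∧ V ⊆ W ∧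
      ∀ W' : Set ι, SemiOrganization re W' → U ⊆ W' → V ⊆ W' → W ⊆ W') ∧
    (∃ W : Set ι, SemiOrganization re W ∧ W ⊆ U ∧ W ⊆ V ∧
      ∀ W' : Set ι, SemiOrganization re W' → W' ⊆ U → W' ⊆ V → W' ⊆ W) :=
  stmt10_general re P h U V hU hV
end
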